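/- arXiv:1908.11264 — 2 statements merged into one kernel-verified Lean document; each statement's English description precedes it below -/
import Mathlib

section
/- In GLP, for ordinals α ≥ β > 0 (and with [0] denoted □), GLP proves ⟨α⟩⊤ → ( (⟨β⟩φ ∨ □ψ) ↔ ⟨β⟩(φ ∨ □ψ) ). -/
/-!
Left to right: `⟨β⟩φ` gives `⟨β⟩(φ ∨ □ψ)` by monotonicity of `⟨β⟩`, while `□ψ` gives `□□ψ`,
hence `[β]□ψ` and `[β](φ ∨ □ψ)`; together with `⟨β⟩⊤`, which follows from `⟨α⟩⊤`, this yields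
`⟨β⟩(φ ∨ □ψ)`. Right to left: if `[β]¬φ`, then `⟨β⟩(φ ∨ □ψ)` gives `⟨β⟩□ψ`, and negative
introspection `¬□ψ → [β]¬□ψ` turns this into `□ψ`.
-/

/-- Formulas of transfinite polymodal provability logic GLP, with
modalities `[ξ]` indexed by ordinals. -/
inductive GLPFormula : Type 1
  | bot : GLPFormula
  | var : ℕ → GLPFormula
  | imp : GLPFormula → GLPFormula → GLPFormula
  | box : Ordinal.{0} → GLPFormula → GLPFormula

namespace GLPFormula

def neg (a : GLPFormula) : GLPFormula := a.imp bot
def top : GLPFormula := neg bot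
def and (a b : GLPFormula) : GLPFormula := (a.imp b.neg).neg
def or (a b : GLPFormula) : GLPFormula := a.neg.imp b
def iff (a b : GLPFormula) : GLPFormula := (a.imp b).and (b.imp a)
/-- `⟨ξ⟩a := ¬[ξ]¬a`. -/
def dia (ξ : Ordinal.{0}) (a : GLPFormula) : GLPFormula := (box ξ a.neg).neg

end GLPFormula

/-- Hilbert-style derivability for GLP (over all ordinal-indexed modalities):
propositional tautologies (via a complete Hilbert basis), distribution,
transitivity, Löb, negative introspection and monotonicity for `ξ < ζ`,
with modus ponens and necessitation for each modality. -/
inductive GLPProof : GLPFormula → Prop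
  | ax1 (a b : GLPFormula) : GLPProof (a.imp (b.imp a))
  | ax2 (a b c : GLPFormula) :
      GLPProof ((a.imp (b.imp c)).imp ((a.imp b).imp (a.imp c)))
  | ax3 (a b : GLPFormula) : GLPProof ((a.neg.imp b.neg).imp (b.imp a))
  | dist (ξ : Ordinal) (a b : GLPFormula) :
      GLPProof ((GLPFormula.box ξ (a.imp b)).imp
        ((GLPFormula.box ξ a).imp (GLPFormula.box ξ b)))
  | trans (ξ : Ordinal) (a : GLPFormula) :
      GLPProof ((GLPFormula.box ξ a).imp (GLPFormula.box ξ (GLPFormula.box ξ a)))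
  | lob (ξ : Ordinal) (a : GLPFormula) :
      GLPProof ((GLPFormula.box ξ ((GLPFormula.box ξ a).imp a)).imp (GLPFormula.box ξ a))
  | negIntro {ξ ζ : Ordinal} (a : GLPFormula) (h : ξ < ζ) :
      GLPProof ((GLPFormula.dia ξ a).imp (GLPFormula.box ζ (GLPFormula.dia ξ a)))
  | mono {ξ ζ : Ordinal} (a : GLPFormula) (h : ξ < ζ) :
      GLPProof ((GLPFormula.box ξ a).imp (GLPFormula.box ζ a))
  | mp {a b : GLPFormula} : GLPProof (a.imp b) → GLPProof a → GLPProof b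
  | nec (ξ : Ordinal) {a : GLPFormula} : GLPProof a → GLPProof (GLPFormula.box ξ a)

open GLPFormula

/-- Necessitation is not applied to hypotheses, which is what makes the deduction theorem
`GLPDeriv.imp_intro` hold. -/
inductive GLPDeriv : List GLPFormula → GLPFormula → Prop
  | thm {Γ : List GLPFormula} {a : GLPFormula} : GLPProof a → GLPDeriv Γ a
  | hyp {Γ : List GLPFormula} {a : GLPFormula} : a ∈ Γ → GLPDeriv Γ a
  | mp {Γ : List GLPFormula} {a b : GLPFormula} :
      GLPDeriv Γ (a.imp b) → GLPDeriv Γ a → GLPDeriv Γ b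

namespace GLPProof

theorem imp_self (a : GLPFormula) : GLPProof (a.imp a) :=
  mp (mp (ax2 a (a.imp a) a) (ax1 a (a.imp a))) (ax1 a a)

theorem imp_intro_left {a b : GLPFormula} (h : GLPProof b) : GLPProof (a.imp b) :=
  mp (ax1 b a) h

end GLPProof

namespace GLPDeriv

theorem imp_intro {Γ : List GLPFormula} {a b : GLPFormula} (d : GLPDeriv (a :: Γ) b) :
    GLPDeriv Γ (a.imp b) := by
  generalize hΔ : a :: Γ = Δ at d
  induction d with
  | thm p => exact .thm (.imp_intro_left p)
  | hyp m =>
    subst hΔ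
    rcases List.mem_cons.mp m with rfl | m
    · exact .thm (.imp_self _)
    · exact .mp (.thm (.ax1 _ _)) (.hyp m)
  | mp _ _ ih₁ ih₂ => exact .mp (.mp (.thm (.ax2 _ _ _)) ih₁) ih₂

theorem toProof {a : GLPFormula} (d : GLPDeriv [] a) : GLPProof a := by
  generalize hΓ : ([] : List GLPFormula) = Γ at d
  induction d with
  | thm p => exact p
  | hyp m => subst hΓ; cases m
  | mp _ _ ih₁ ih₂ => exact .mp ih₁ ih₂

end GLPDeriv

namespace GLPProof

theorem imp_trans {a b c : GLPFormula} (hab : GLPProof (a.imp b)) (hbc : GLPProof (b.imp c)) :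
    GLPProof (a.imp c) :=
  GLPDeriv.toProof <| .imp_intro <| .mp (.thm hbc) (.mp (.thm hab) (.hyp (.head _)))

theorem not_not_intro (a : GLPFormula) : GLPProof (a.imp a.neg.neg) :=
  GLPDeriv.toProof <| .imp_intro <| .imp_intro <|
    .mp (.hyp (.head _)) (.hyp (.tail _ (.head _)))

theorem not_not_elim (a : GLPFormula) : GLPProof (a.neg.neg.imp a) :=
  mp (ax3 a a.neg.neg) (not_not_intro a.neg)

theorem bot_imp (a : GLPFormula) : GLPProof (bot.imp a) :=
  mp (ax3 a bot) (imp_intro_left (imp_self bot))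

theorem contrapose {a b : GLPFormula} (h : GLPProof (a.imp b)) : GLPProof (b.neg.imp a.neg) :=
  GLPDeriv.toProof <| .imp_intro <| .imp_intro <|
    .mp (.hyp (.tail _ (.head _))) (.mp (.thm h) (.hyp (.head _)))

theorem imp_or_left (a b : GLPFormula) : GLPProof (a.imp (a.or b)) :=
  GLPDeriv.toProof <| .imp_intro <| .imp_intro <|
    .mp (.thm (bot_imp b)) (.mp (.hyp (.head _)) (.hyp (.tail _ (.head _))))

theorem imp_or_right (a b : GLPFormula) : GLPProof (b.imp (a.or b)) :=
  ax1 b a.neg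

theorem or_elim {d a b c : GLPFormula} (ha : GLPProof (d.imp (a.imp c)))
    (hb : GLPProof (d.imp (b.imp c))) : GLPProof (d.imp ((a.or b).imp c)) := by
  refine GLPDeriv.toProof <| .imp_intro <| .imp_intro <| .mp (.thm (not_not_elim c)) <|
    .imp_intro ?_
  have hnc : GLPDeriv [c.neg, a.or b, d] c.neg := .hyp (.head _)
  have hd : GLPDeriv [c.neg, a.or b, d] d := .hyp (.tail _ (.tail _ (.head _)))
  have hna : GLPDeriv [c.neg, a.or b, d] a.neg :=
    .imp_intro <| .mp (.hyp (.tail _ (.head _))) <|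
      .mp (.mp (.thm ha) (.hyp (.tail _ (.tail _ (.tail _ (.head _)))))) (.hyp (.head _))
  have hb' : GLPDeriv [c.neg, a.or b, d] b := .mp (.hyp (.tail _ (.head _))) hna
  exact .mp hnc (.mp (.mp (.thm hb) hd) hb')

theorem imp_iff_intro {d a b : GLPFormula} (hab : GLPProof (d.imp (a.imp b)))
    (hba : GLPProof (d.imp (b.imp a))) : GLPProof (d.imp (a.iff b)) :=
  GLPDeriv.toProof <| .imp_intro <| .imp_intro <|
    .mp (.mp (.hyp (.head _)) (.mp (.thm hab) (.hyp (.tail _ (.head _)))))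
      (.mp (.thm hba) (.hyp (.tail _ (.head _))))

theorem box_imp_box {ξ : Ordinal} {a b : GLPFormula} (h : GLPProof (a.imp b)) :
    GLPProof ((box ξ a).imp (box ξ b)) :=
  mp (dist ξ a b) (nec ξ h)

theorem box_imp_box₂ {ξ : Ordinal} {a b c : GLPFormula} (h : GLPProof (a.imp (b.imp c))) :
    GLPProof ((box ξ a).imp ((box ξ b).imp (box ξ c))) :=
  imp_trans (box_imp_box h) (dist ξ b c)

theorem dia_imp_dia {ξ : Ordinal} {a b : GLPFormula} (h : GLPProof (a.imp b)) :
    GLPProof ((dia ξ a).imp (dia ξ b)) :=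
  contrapose (box_imp_box (contrapose h))

theorem dia_imp_dia_of_le {ξ ζ : Ordinal} (h : ξ ≤ ζ) (a : GLPFormula) :
    GLPProof ((dia ζ a).imp (dia ξ a)) := by
  rcases h.lt_or_eq with h | rfl
  · exact contrapose (mono _ h)
  · exact imp_self _

theorem dia_box_imp_dia {ξ : Ordinal} {a b c : GLPFormula} (h : GLPProof (a.imp (b.imp c))) :
    GLPProof ((dia ξ a).imp ((box ξ b).imp (dia ξ c))) := by
  have hneg : GLPProof (b.imp (c.neg.imp a.neg)) :=
    GLPDeriv.toProof <| .imp_intro <| .imp_intro <| .imp_intro <|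
      .mp (.hyp (.tail _ (.head _))) <|
        .mp (.mp (.thm h) (.hyp (.head _))) (.hyp (.tail _ (.tail _ (.head _))))
  exact GLPDeriv.toProof <| .imp_intro <| .imp_intro <| .imp_intro <|
    .mp (.hyp (.tail _ (.tail _ (.head _)))) <|
      .mp (.mp (.thm (box_imp_box₂ hneg)) (.hyp (.tail _ (.head _)))) (.hyp (.head _))

theorem box_imp_box_box_of_lt {ξ ζ : Ordinal} (h : ξ < ζ) (a : GLPFormula) :
    GLPProof ((box ξ a).imp (box ζ (box ξ a))) :=
  imp_trans (trans ξ a) (mono _ h)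

theorem dia_box_imp_box_of_lt {ξ ζ : Ordinal} (h : ξ < ζ) (a : GLPFormula) :
    GLPProof ((dia ζ (box ξ a)).imp (box ξ a)) := by
  have hnot_box : GLPProof ((box ξ a).neg.imp (dia ξ a.neg)) :=
    contrapose (box_imp_box (not_not_elim a))
  have hdia : GLPProof ((dia ξ a.neg).imp (box ξ a).neg) :=
    contrapose (box_imp_box (not_not_intro a))
  have hintro : GLPProof ((box ξ a).neg.imp (box ζ (box ξ a).neg)) :=
    imp_trans hnot_box (imp_trans (negIntro a.neg h) (box_imp_box hdia))
  exact imp_trans (contrapose hintro) (not_not_elim _)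

theorem or_box_imp_dia_or_box {ξ ζ : Ordinal} (h : ξ < ζ) (φ ψ : GLPFormula) :
    GLPProof ((dia ζ top).imp (((dia ζ φ).or (box ξ ψ)).imp (dia ζ (φ.or (box ξ ψ))))) := by
  have hbox : GLPProof ((box ξ ψ).imp (box ζ (φ.or (box ξ ψ)))) :=
    imp_trans (box_imp_box_box_of_lt h ψ) (box_imp_box (imp_or_right _ _))
  refine or_elim (imp_intro_left (dia_imp_dia (imp_or_left _ _))) ?_
  exact GLPDeriv.toProof <| .imp_intro <| .imp_intro <|
    .mp (.mp (.thm (dia_box_imp_dia (imp_intro_left (imp_self _)))) (.hyp (.tail _ (.head _))))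
      (.mp (.thm hbox) (.hyp (.head _)))

theorem dia_or_box_imp_or_box {ξ ζ : Ordinal} (h : ξ < ζ) (φ ψ : GLPFormula) :
    GLPProof ((dia ζ (φ.or (box ξ ψ))).imp ((dia ζ φ).or (box ξ ψ))) :=
  -- `φ.or χ` is `φ.neg.imp χ`, so disjunctive syllogism is an instance of `imp_self`.
  GLPDeriv.toProof <| .imp_intro <| .imp_intro <|
    .mp (.thm (dia_box_imp_box_of_lt h ψ)) <|
      .mp (.mp (.thm (dia_box_imp_dia (imp_self (φ.or (box ξ ψ))))) (.hyp (.tail _ (.head _))))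
        (.mp (.thm (not_not_elim _)) (.hyp (.head _)))

end GLPProof

/-- for ordinals `α ≥ β > 0` (with `□ = [0]`), GLP proves
`⟨α⟩⊤ → ((⟨β⟩φ ∨ □ψ) ↔ ⟨β⟩(φ ∨ □ψ))`. -/
theorem glp_box_disjunction_dia (α β : Ordinal) (h0 : 0 < β) (h : β ≤ α)
    (φ ψ : GLPFormula) :
    GLPProof ((GLPFormula.dia α GLPFormula.top).imp
      (((GLPFormula.dia β φ).or (GLPFormula.box 0 ψ)).iff
        (GLPFormula.dia β (φ.or (GLPFormula.box 0 ψ))))) :=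
  GLPProof.imp_iff_intro
    (GLPProof.imp_trans (GLPProof.dia_imp_dia_of_le h top)
      (GLPProof.or_box_imp_dia_or_box h0 φ ψ))
    (GLPProof.imp_intro_left (GLPProof.dia_or_box_imp_or_box h0 φ ψ))
end

section
/- Basic closure properties of Münchhausen provability without induction: for a Λ-one-Münchhausen theory T with predicate [ξ]_T, T proves: (1) ∀ξ ∀χ ([ξ]_T ⊥ → [ξ]_T χ); (2) ∀ξ ∀φ,χ ([ξ]_T φ ∧ □_T(φ→χ) → [ξ]_T χ); (3) ∀φ,ψ ([ξ]_T φ ∧ □_T ψ → [ξ]_T(φ∧ψ)); (4) ∃x [ξ]_T φ(ẋ) → [ξ]_T ∃x φ(x). -/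
/-- An abstract arithmetical theory `T`: a type `S` of sentences, derivability
`Prov` (for `T ⊢ ·`), falsum and implication, a standard formalized
provability predicate `box` (for `□_T`), an internal representation `ltS` of
the ordering `≺` on (notations for) ordinals, and internal existential
quantifiers over formulas (`exF`), ordinal notations (`exO`), numbers
(`exN`), and finite sequences of (ordinal, formula) pairs (`exL`). -/
structure MFrame : Type 2 where
  S : Type 1
  Prov : S → Prop
  bot : S
  imp : S → S → S
  box : S → S
  ltS : Ordinal.{0} → Ordinal.{0} → S
  exF : (S → S) → S
  exO : (Ordinal.{0} → S) → S
  exN : (ℕ → S) → S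
  exL : (List (Ordinal.{0} × S) → S) → S

namespace MFrame

variable (F : MFrame)

def neg (a : F.S) : F.S := F.imp a F.bot
def top : F.S := F.neg F.bot
def and (a b : F.S) : F.S := F.neg (F.imp a (F.neg b))
def or (a b : F.S) : F.S := F.imp (F.neg a) b
def iff (a b : F.S) : F.S := F.and (F.imp a b) (F.imp b a)

/-- `⟨ξ⟩_T a := ¬[ξ]_T ¬a` for a candidate Münchhausen predicate `M`. -/
def mdia (M : Ordinal.{0} → F.S → F.S) (ξ : Ordinal.{0}) (a : F.S) : F.S :=
  F.neg (M ξ (F.neg a))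

/-- Basic conditions on the theory `T`: classical propositional logic via a
complete Hilbert basis with modus ponens, the Hilbert–Bernays derivability
conditions for `□_T`, introduction/elimination rules for the internal
existential quantifiers, and correctness of the internal ordering `≺`
(true facts `ξ ≺ ζ` are provable, false ones refutable, and `T` proves `≺`
transitive). -/
structure Basic (F : MFrame) : Prop where
  mp : ∀ {a b : F.S}, F.Prov (F.imp a b) → F.Prov a → F.Prov b
  ax1 : ∀ a b : F.S, F.Prov (F.imp a (F.imp b a))
  ax2 : ∀ a b c : F.S,
    F.Prov (F.imp (F.imp a (F.imp b c)) (F.imp (F.imp a b) (F.imp a c)))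
  ax3 : ∀ a b : F.S,
    F.Prov (F.imp (F.imp (F.neg a) (F.neg b)) (F.imp b a))
  nec : ∀ {a : F.S}, F.Prov a → F.Prov (F.box a)
  dist : ∀ a b : F.S,
    F.Prov (F.imp (F.box (F.imp a b)) (F.imp (F.box a) (F.box b)))
  d3 : ∀ a : F.S, F.Prov (F.imp (F.box a) (F.box (F.box a)))
  ltS_trans : ∀ ξ ζ η : Ordinal,
    F.Prov (F.imp (F.and (F.ltS ξ ζ) (F.ltS ζ η)) (F.ltS ξ η))
  ltS_intro : ∀ {ξ ζ : Ordinal}, ξ < ζ → F.Prov (F.ltS ξ ζ)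
  ltS_not : ∀ {ξ ζ : Ordinal}, ¬ ξ < ζ → F.Prov (F.neg (F.ltS ξ ζ))
  exF_intro : ∀ (G : F.S → F.S) (a : F.S), F.Prov (F.imp (G a) (F.exF G))
  exF_elim : ∀ (G : F.S → F.S) (c : F.S),
    (∀ a, F.Prov (F.imp (G a) c)) → F.Prov (F.imp (F.exF G) c)
  exO_intro : ∀ (G : Ordinal → F.S) (ξ : Ordinal), F.Prov (F.imp (G ξ) (F.exO G))
  exO_elim : ∀ (G : Ordinal → F.S) (c : F.S),
    (∀ ξ, F.Prov (F.imp (G ξ) c)) → F.Prov (F.imp (F.exO G) c)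
  exN_intro : ∀ (G : ℕ → F.S) (n : ℕ), F.Prov (F.imp (G n) (F.exN G))
  exN_elim : ∀ (G : ℕ → F.S) (c : F.S),
    (∀ n, F.Prov (F.imp (G n) c)) → F.Prov (F.imp (F.exN G) c)
  exL_intro : ∀ (G : List (Ordinal × F.S) → F.S) (ρ : List (Ordinal × F.S)),
    F.Prov (F.imp (G ρ) (F.exL G))
  exL_elim : ∀ (G : List (Ordinal × F.S) → F.S) (c : F.S),
    (∀ ρ, F.Prov (F.imp (G ρ) c)) → F.Prov (F.imp (F.exL G) c)

/-- `T` is a single-oracle (one-)Münchhausen theory for `Λ`, with candidate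
predicate `M ζ φ` (for `[ζ]_T φ`): `T` proves the defining recursion
`[ζ]φ ↔ □φ ∨ ∃ψ ∃ξ≺ζ (⟨ξ⟩ψ ∧ □(⟨ξ⟩ψ → φ))` for `ζ ≺ Λ`, proves
`ξ ≺ ζ → [ζ](ξ ≺ ζ)`, and proves that `0` is the `≺`-minimal element. -/
structure OneMunch (F : MFrame) (Λ : Ordinal.{0}) (M : Ordinal.{0} → F.S → F.S) : Prop where
  recEq : ∀ ζ < Λ, ∀ φ : F.S,
    F.Prov (F.iff (M ζ φ)
      (F.or (F.box φ)
        (F.exF fun ψ => F.exO fun ξ =>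
          F.and (F.ltS ξ ζ)
            (F.and (F.mdia M ξ ψ) (F.box (F.imp (F.mdia M ξ ψ) φ))))))
  ltS_box : ∀ {ξ ζ : Ordinal}, ξ < ζ →
    F.Prov (F.imp (F.ltS ξ ζ) (M ζ (F.ltS ξ ζ)))
  min_zero : ∀ ξ : Ordinal, F.Prov (F.neg (F.ltS ξ 0))

/-- The internal conjunction `⟨τ⟩_T σ` asserting of a finite sequence `ρ` of
pairs (ordinal `τ_i`, formula `σ(i)`) that every `⟨τ_i⟩_T σ(i)` holds. -/
def listDia (M : Ordinal.{0} → F.S → F.S) (ρ : List (Ordinal.{0} × F.S)) : F.S :=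
  ρ.foldr (fun p acc => F.and (F.mdia M p.1 p.2) acc) F.top

/-- The internal conjunction asserting `τ ≺ α`, i.e. every ordinal entry of
the sequence `ρ` is `≺ α`. -/
def listLt (ρ : List (Ordinal.{0} × F.S)) (α : Ordinal.{0}) : F.S :=
  ρ.foldr (fun p acc => F.and (F.ltS p.1 α) acc) F.top

/-- `T` is a (multiple-oracle) Münchhausen theory for `Λ` with candidate
predicate `M α φ`: `T` proves the recursion
`[α]φ ↔ □φ ∨ ∃σ ∃τ≺α (⟨τ⟩σ ∧ □(⟨τ⟩σ → φ))`, where the internal existential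
ranges over finite sequences `ρ` of pairs (which encodes the pair `σ, τ` of
equal-length sequences of formulas and of ordinals), together with
`ξ ≺ ζ → [ζ](ξ ≺ ζ)`. -/
structure MultiMunch (F : MFrame) (Λ : Ordinal.{0}) (M : Ordinal.{0} → F.S → F.S) : Prop where
  recEq : ∀ α < Λ, ∀ φ : F.S,
    F.Prov (F.iff (M α φ)
      (F.or (F.box φ)
        (F.exL fun ρ =>
          F.and (F.listLt ρ α)
            (F.and (F.listDia M ρ) (F.box (F.imp (F.listDia M ρ) φ))))))
  ltS_box : ∀ {ξ ζ : Ordinal}, ξ < ζ →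
    F.Prov (F.imp (F.ltS ξ ζ) (M ζ (F.ltS ξ ζ)))
  min_zero : ∀ ξ : Ordinal, F.Prov (F.neg (F.ltS ξ 0))

/-- Truth in the standard model: a predicate `Tr` making `T` sound, commuting
with the logical operations, with `Tr (□φ) ↔ T ⊢ φ` and with the internal
quantifiers and ordering evaluated standardly. -/
structure Truth (F : MFrame) (Tr : F.S → Prop) : Prop where
  sound : ∀ a : F.S, F.Prov a → Tr a
  bot : ¬ Tr F.bot
  imp : ∀ a b : F.S, Tr (F.imp a b) ↔ (Tr a → Tr b)
  box : ∀ a : F.S, Tr (F.box a) ↔ F.Prov a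
  ltS : ∀ ξ ζ : Ordinal, Tr (F.ltS ξ ζ) ↔ ξ < ζ
  exF : ∀ G : F.S → F.S, Tr (F.exF G) ↔ ∃ a, Tr (G a)
  exO : ∀ G : Ordinal → F.S, Tr (F.exO G) ↔ ∃ ξ, Tr (G ξ)
  exN : ∀ G : ℕ → F.S, Tr (F.exN G) ↔ ∃ n, Tr (G n)
  exL : ∀ G : List (Ordinal × F.S) → F.S, Tr (F.exL G) ↔ ∃ ρ, Tr (G ρ)

end MFrame

/-!
Unfolding the recursion, `[ξ]φ` is either `□φ` or a witness `η ≺ ξ, ⟨η⟩ψ, □(⟨η⟩ψ → φ)`.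
Given `□(φ → χ)`, both disjuncts transform into the corresponding disjuncts for `χ`
(by `□`-distribution, respectively by composing the implication under `□`), so
`[ξ]φ ∧ □(φ → χ) → [ξ]χ` needs only one unfolding of the recursion and no induction.
The other three properties are instances of this closure.
-/

namespace MFrame

variable {F : MFrame}

def Derives (F : MFrame) (Γ : List F.S) (a : F.S) : Prop :=
  F.Prov (Γ.foldr F.imp a)

namespace Basic

theorem imp_self (hF : F.Basic) (a : F.S) : F.Prov (F.imp a a) :=
  hF.mp (hF.mp (hF.ax2 a (F.imp a a) a) (hF.ax1 a (F.imp a a))) (hF.ax1 a a)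

theorem imp_trans (hF : F.Basic) {a b c : F.S} (hab : F.Prov (F.imp a b))
    (hbc : F.Prov (F.imp b c)) : F.Prov (F.imp a c) :=
  hF.mp (hF.mp (hF.ax2 a b c) (hF.mp (hF.ax1 (F.imp b c) a) hbc)) hab

theorem imp_swap (hF : F.Basic) {a b c : F.S} (h : F.Prov (F.imp a (F.imp b c))) :
    F.Prov (F.imp b (F.imp a c)) :=
  hF.imp_trans (hF.ax1 b a) (hF.mp (hF.ax2 a b c) h)

theorem imp_comp (hF : F.Basic) (c p q : F.S) :
    F.Prov (F.imp (F.imp p q) (F.imp (F.imp c p) (F.imp c q))) :=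
  hF.imp_trans (hF.ax1 (F.imp p q) c) (hF.ax2 c p q)

theorem imp_imp_right (hF : F.Basic) (c : F.S) {p q : F.S} (h : F.Prov (F.imp p q)) :
    F.Prov (F.imp (F.imp c p) (F.imp c q)) :=
  hF.mp (hF.imp_comp c p q) h

theorem imp_imp_trans (hF : F.Basic) {a b c d : F.S} (h : F.Prov (F.imp a (F.imp b c)))
    (hcd : F.Prov (F.imp c d)) : F.Prov (F.imp a (F.imp b d)) :=
  hF.imp_trans h (hF.imp_imp_right b hcd)

theorem not_not_intro (hF : F.Basic) (a : F.S) : F.Prov (F.imp a (F.neg (F.neg a))) :=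
  hF.imp_swap (hF.imp_self (F.neg a))

theorem not_not_elim (hF : F.Basic) (a : F.S) : F.Prov (F.imp (F.neg (F.neg a)) a) :=
  hF.mp (hF.ax3 a (F.neg (F.neg a))) (hF.not_not_intro (F.neg a))

theorem foldr_imp_distrib (hF : F.Basic) (Γ : List F.S) (a b : F.S) :
    F.Prov (F.imp (Γ.foldr F.imp (F.imp a b))
      (F.imp (Γ.foldr F.imp a) (Γ.foldr F.imp b))) := by
  induction Γ with
  | nil => exact hF.imp_self (F.imp a b)
  | cons c Γ ih => exact hF.imp_trans (hF.imp_imp_right c ih) (hF.ax2 c _ _)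

end Basic

namespace Derives

theorem imp_elim (hF : F.Basic) {Γ : List F.S} {a b : F.S} (hab : F.Derives Γ (F.imp a b))
    (ha : F.Derives Γ a) : F.Derives Γ b :=
  hF.mp (hF.mp (hF.foldr_imp_distrib Γ a b) hab) ha

theorem of_prov (hF : F.Basic) {a : F.S} : ∀ Γ : List F.S, F.Prov a → F.Derives Γ a
  | [], h => h
  | c :: Γ, h => hF.mp (hF.ax1 _ c) (of_prov hF Γ h)

theorem cons (hF : F.Basic) {Γ : List F.S} {b : F.S} (c : F.S) (h : F.Derives Γ b) :
    F.Derives (c :: Γ) b :=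
  hF.mp (hF.ax1 _ c) h

theorem head (hF : F.Basic) (a : F.S) : ∀ Γ : List F.S, F.Derives (a :: Γ) a
  | [] => hF.imp_self a
  | c :: Γ => hF.imp_trans (head hF a Γ) (hF.ax1 _ c)

theorem imp_intro {Γ : List F.S} {a b : F.S} (h : F.Derives (Γ ++ [a]) b) :
    F.Derives Γ (F.imp a b) := by
  simpa only [Derives, List.foldr_append, List.foldr_cons, List.foldr_nil] using h

theorem by_contradiction (hF : F.Basic) {Γ : List F.S} {a : F.S}
    (h : F.Derives (Γ ++ [F.neg a]) F.bot) : F.Derives Γ a :=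
  imp_elim hF (of_prov hF Γ (hF.not_not_elim a)) (imp_intro h)

end Derives

namespace Basic

open Derives

theorem bot_imp (hF : F.Basic) (a : F.S) : F.Prov (F.imp F.bot a) :=
  by_contradiction hF (Γ := [F.bot]) (head hF F.bot [F.neg a])

theorem and_intro (hF : F.Basic) (a b : F.S) :
    F.Prov (F.imp a (F.imp b (F.and a b))) :=
  show F.Derives [a, b, F.imp a (F.neg b)] F.bot from
    imp_elim hF
      (imp_elim hF (cons hF a (cons hF b (head hF _ [])))
        (head hF a _))
      (cons hF a (head hF b _))

theorem and_left (hF : F.Basic) (a b : F.S) : F.Prov (F.imp (F.and a b) a) := by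
  have hbot : F.Derives ([F.and a b, F.neg a] ++ [a] ++ [b]) F.bot :=
    imp_elim hF (cons hF _ (head hF (F.neg a) [a, b]))
      (cons hF _ (cons hF _ (head hF a [b])))
  exact by_contradiction hF (Γ := [F.and a b])
    (imp_elim hF (head hF _ _) (imp_intro (imp_intro hbot)))

theorem and_right (hF : F.Basic) (a b : F.S) : F.Prov (F.imp (F.and a b) b) := by
  have hbot : F.Derives ([F.and a b, F.neg b] ++ [a] ++ [b]) F.bot :=
    imp_elim hF (cons hF _ (head hF (F.neg b) [a, b]))
      (cons hF _ (cons hF _ (cons hF _ (head hF b []))))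
  exact by_contradiction hF (Γ := [F.and a b])
    (imp_elim hF (head hF _ _) (imp_intro (imp_intro hbot)))

theorem and_imp (hF : F.Basic) {a b c : F.S} (h : F.Prov (F.imp a (F.imp b c))) :
    F.Prov (F.imp (F.and a b) c) := by
  show F.Derives [F.and a b] c
  have hab : F.Derives [F.and a b] (F.and a b) := head hF _ []
  have ha := imp_elim hF (of_prov hF _ (hF.and_left a b)) hab
  have hb := imp_elim hF (of_prov hF _ (hF.and_right a b)) hab
  exact imp_elim hF (imp_elim hF (of_prov hF _ h) ha) hb

theorem and_imp_and_right (hF : F.Basic) {a b b' B : F.S}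
    (h : F.Prov (F.imp b (F.imp B b'))) :
    F.Prov (F.imp (F.and a b) (F.imp B (F.and a b'))) := by
  show F.Derives [F.and a b, B] (F.and a b')
  have hab : F.Derives [F.and a b, B] (F.and a b) := head hF _ _
  have ha := imp_elim hF (of_prov hF _ (hF.and_left a b)) hab
  have hb := imp_elim hF (of_prov hF _ (hF.and_right a b)) hab
  have hb' : F.Derives [F.and a b, B] b' :=
    imp_elim hF (imp_elim hF (of_prov hF _ h) hb) (cons hF _ (head hF B []))
  exact imp_elim hF (imp_elim hF (of_prov hF _ (hF.and_intro a b')) ha) hb'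

theorem or_inl (hF : F.Basic) (a b : F.S) : F.Prov (F.imp a (F.or a b)) :=
  show F.Derives [a, F.neg a] b from
    imp_elim hF (of_prov hF _ (hF.bot_imp b))
      (imp_elim hF (cons hF a (head hF _ [])) (head hF a _))

theorem or_inr (hF : F.Basic) (a b : F.S) : F.Prov (F.imp b (F.or a b)) :=
  hF.ax1 b (F.neg a)

theorem or_elim (hF : F.Basic) {a b c : F.S} (hac : F.Prov (F.imp a c))
    (hbc : F.Prov (F.imp b c)) : F.Prov (F.imp (F.or a b) c) := by
  have hbot : F.Derives ([F.or a b, F.neg c] ++ [a]) F.bot :=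
    imp_elim hF (cons hF _ (head hF (F.neg c) [a]))
      (imp_elim hF (of_prov hF _ hac) (cons hF _ (cons hF _ (head hF a []))))
  have hb : F.Derives [F.or a b, F.neg c] b := imp_elim hF (head hF _ _) (imp_intro hbot)
  exact by_contradiction hF (Γ := [F.or a b])
    (imp_elim hF (cons hF _ (head hF (F.neg c) [])) (imp_elim hF (of_prov hF _ hbc) hb))

theorem or_imp_or (hF : F.Basic) {a a' b b' B : F.S}
    (ha : F.Prov (F.imp a (F.imp B a'))) (hb : F.Prov (F.imp b (F.imp B b'))) :
    F.Prov (F.imp (F.or a b) (F.imp B (F.or a' b'))) :=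
  hF.or_elim (hF.imp_imp_trans ha (hF.or_inl a' b')) (hF.imp_imp_trans hb (hF.or_inr a' b'))

theorem iff_mp (hF : F.Basic) {a b : F.S} (h : F.Prov (F.iff a b)) :
    F.Prov (F.imp a b) :=
  hF.mp (hF.and_left _ _) h

theorem iff_mpr (hF : F.Basic) {a b : F.S} (h : F.Prov (F.iff a b)) :
    F.Prov (F.imp b a) :=
  hF.mp (hF.and_right _ _) h

theorem exF_imp_exF (hF : F.Basic) {G H : F.S → F.S} {B : F.S}
    (h : ∀ a, F.Prov (F.imp (G a) (F.imp B (H a)))) :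
    F.Prov (F.imp (F.exF G) (F.imp B (F.exF H))) :=
  hF.exF_elim G _ fun a => hF.imp_imp_trans (h a) (hF.exF_intro H a)

theorem exO_imp_exO (hF : F.Basic) {G H : Ordinal → F.S} {B : F.S}
    (h : ∀ ξ, F.Prov (F.imp (G ξ) (F.imp B (H ξ)))) :
    F.Prov (F.imp (F.exO G) (F.imp B (F.exO H))) :=
  hF.exO_elim G _ fun ξ => hF.imp_imp_trans (h ξ) (hF.exO_intro H ξ)

theorem box_mono (hF : F.Basic) {a b : F.S} (h : F.Prov (F.imp a b)) :
    F.Prov (F.imp (F.box a) (F.box b)) :=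
  hF.mp (hF.dist a b) (hF.nec h)

theorem box_imp_trans (hF : F.Basic) (d p q : F.S) :
    F.Prov (F.imp (F.box (F.imp p q))
      (F.imp (F.box (F.imp d p)) (F.box (F.imp d q)))) :=
  hF.imp_trans (hF.box_mono (hF.imp_comp d p q)) (hF.dist _ _)

end Basic

def munchBody (M : Ordinal → F.S → F.S) (ζ : Ordinal) (φ : F.S) : F.S :=
  F.or (F.box φ)
    (F.exF fun ψ => F.exO fun ξ =>
      F.and (F.ltS ξ ζ) (F.and (F.mdia M ξ ψ) (F.box (F.imp (F.mdia M ξ ψ) φ))))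

theorem Basic.munchBody_imp_box_imp (hF : F.Basic) (M : Ordinal → F.S → F.S)
    (ζ : Ordinal) (φ χ : F.S) :
    F.Prov (F.imp (F.munchBody M ζ φ) (F.imp (F.box (F.imp φ χ)) (F.munchBody M ζ χ))) :=
  hF.or_imp_or (hF.imp_swap (hF.dist φ χ))
    (hF.exF_imp_exF fun _ => hF.exO_imp_exO fun _ =>
      hF.and_imp_and_right (hF.and_imp_and_right (hF.imp_swap (hF.box_imp_trans _ φ χ))))

namespace OneMunch

variable {Λ : Ordinal} {M : Ordinal → F.S → F.S}

theorem imp_box_imp (hF : F.Basic) (hM : F.OneMunch Λ M) {ζ : Ordinal} (hζ : ζ < Λ)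
    (φ χ : F.S) :
    F.Prov (F.imp (M ζ φ) (F.imp (F.box (F.imp φ χ)) (M ζ χ))) :=
  hF.imp_trans (hF.iff_mp (hM.recEq ζ hζ φ))
    (hF.imp_imp_trans (hF.munchBody_imp_box_imp M ζ φ χ) (hF.iff_mpr (hM.recEq ζ hζ χ)))

theorem mono (hF : F.Basic) (hM : F.OneMunch Λ M) {ζ : Ordinal} (hζ : ζ < Λ)
    {φ χ : F.S} (h : F.Prov (F.imp φ χ)) : F.Prov (F.imp (M ζ φ) (M ζ χ)) :=
  hF.mp (hF.imp_swap (hM.imp_box_imp hF hζ φ χ)) (hF.nec h)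

end OneMunch

end MFrame

/-- basic closure properties of one-Münchhausen provability,
provable without induction: (1) ex falso `[ξ]⊥ → [ξ]χ`; (2) closure under
provable implication; (3) `[ξ]φ ∧ □ψ → [ξ](φ∧ψ)`; (4) the Barcan-type fact
`∃x [ξ]φ(ẋ) → [ξ]∃x φ(x)`. -/
theorem oneMunch_basic_closure (F : MFrame) (hF : F.Basic)
    (Λ : Ordinal) (M : Ordinal → F.S → F.S) (hM : F.OneMunch Λ M) :
    ∀ ξ < Λ,
      (∀ χ : F.S, F.Prov (F.imp (M ξ F.bot) (M ξ χ))) ∧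
      (∀ φ χ : F.S,
        F.Prov (F.imp (F.and (M ξ φ) (F.box (F.imp φ χ))) (M ξ χ))) ∧
      (∀ φ ψ : F.S,
        F.Prov (F.imp (F.and (M ξ φ) (F.box ψ)) (M ξ (F.and φ ψ)))) ∧
      (∀ P : ℕ → F.S,
        F.Prov (F.imp (F.exN fun x => M ξ (P x)) (M ξ (F.exN P)))) := by
  intro ξ hξ
  refine ⟨fun χ => hM.mono hF hξ (hF.bot_imp χ),
    fun φ χ => hF.and_imp (hM.imp_box_imp hF hξ φ χ), fun φ ψ => ?_,
    fun P => hF.exN_elim _ _ fun n => hM.mono hF hξ (hF.exN_intro P n)⟩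
  have hbox : F.Prov (F.imp (F.box ψ) (F.box (F.imp φ (F.and φ ψ)))) :=
    hF.box_mono (hF.imp_swap (hF.and_intro φ ψ))
  exact hF.and_imp (hF.imp_swap
    (hF.imp_trans hbox (hF.imp_swap (hM.imp_box_imp hF hξ φ (F.and φ ψ)))))
end
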